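/- arXiv:1111.5756 — 2 statements merged into one kernel-verified Lean document; each statement's English description precedes it below -/
import Mathlib

section
/- Let G be a 2-connected weighted graph (a finite simple graph with a non-negative real weight on each edge), let x and y be two vertices of G, and let d be a real number. If every vertex v of G other than x and y has weighted degree at least d, then G contains a path with end-vertices x and y whose weight (sum of the weights of its edges) is at least d. -/
/-!
Induction on the number of vertices. For `d ≤ 0` any path will do, and on three vertices the
middle vertex `z` of the path `x z y` has weighted degree `w z x + w z y`. Otherwise there are two
cases.

If some `{x, c}` separates a component `K` of `G - x - c` not containing `y` from the rest of the
graph, the graph induced on `K ∪ {x, c}` plus an edge `xc` of weight `0` is smaller and still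
2-connected; it has an `x`–`c` path of weight at least `d > 0`, which therefore avoids the new edge,
and a path from `c` to `y` avoiding `K ∪ {x}` completes it.

Otherwise contract the edge `xa` to a heaviest neighbour `a ≠ y` of `x`, giving the new edge `xv`
the weight `w x a + w a v` when `a ~ v`. The contraction is 2-connected because `G - x - a` is
connected, the maximality of `w x a` keeps the weighted degrees of the other vertices from
dropping, and an `x`–`y` path of the contraction expands to one of `G` of the same weight.
-/

open SimpleGraph

variable {V : Type*}

/-- A graph is 2-connected if it has at least 3 vertices and remains
connected after deleting any single vertex. -/
def SimpleGraph.TwoConnected (G : SimpleGraph V) : Prop :=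
  3 ≤ Nat.card V ∧ ∀ v : V, (G.induce {u : V | u ≠ v}).Connected

/-- The weighted degree of a vertex: sum of the weights of incident edges. -/
noncomputable def SimpleGraph.wDeg (G : SimpleGraph V) (w : V → V → ℝ) (v : V) : ℝ :=
  ∑ᶠ u ∈ {u : V | G.Adj v u}, w v u

/-- The weight of a walk: the sum of the weights of its edges. -/
def SimpleGraph.Walk.wWeight {G : SimpleGraph V} (w : V → V → ℝ) {u v : V}
    (p : G.Walk u v) : ℝ :=
  (p.darts.map fun d => w d.toProd.1 d.toProd.2).sum

theorem Finset.sum_le_sum_of_eq_of_ne_pair {ι M : Type*} [AddCommMonoid M] [PartialOrder M]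
    [IsOrderedAddMonoid M] {s : Finset ι} {f g : ι → M} {a b : ι} (ha : a ∈ s) (hb : b ∈ s)
    (hab : a ≠ b) (hfg : ∀ i ∈ s, i ≠ a → i ≠ b → f i = g i) (hle : f a + f b ≤ g a + g b) :
    ∑ i ∈ s, f i ≤ ∑ i ∈ s, g i := by
  classical
  have hsub : {a, b} ⊆ s := Finset.insert_subset ha (Finset.singleton_subset_iff.2 hb)
  rw [← Finset.sum_sdiff hsub, ← Finset.sum_sdiff (f := g) hsub, Finset.sum_pair hab,
    Finset.sum_pair hab, Finset.sum_congr rfl fun i hi => hfg i (Finset.mem_sdiff.1 hi).1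
      (by simp_all) (by simp_all)]
  gcongr

namespace SimpleGraph

namespace Walk

variable {G : SimpleGraph V}

section Weight

variable (w : V → V → ℝ)

@[simp]
theorem wWeight_nil {u : V} : (nil : G.Walk u u).wWeight w = 0 := rfl

@[simp]
theorem wWeight_cons {u v z : V} (h : G.Adj u v) (p : G.Walk v z) :
    (cons h p).wWeight w = w u v + p.wWeight w := by
  simp [wWeight]

theorem wWeight_append {u v z : V} (p : G.Walk u v) (q : G.Walk v z) :
    (p.append q).wWeight w = p.wWeight w + q.wWeight w := by
  simp [wWeight]

@[simp]
theorem wWeight_transfer {H : SimpleGraph V} {u v : V} (p : G.Walk u v)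
    (hp : ∀ e ∈ p.edges, e ∈ H.edgeSet) : (p.transfer H hp).wWeight w = p.wWeight w := by
  induction p with
  | nil => rfl
  | cons h p ih => exact congrArg (w _ _ + ·) (ih _)

end Weight

theorem wWeight_nonneg {w : V → V → ℝ} (hw : ∀ u v, 0 ≤ w u v) {u v : V} (p : G.Walk u v) :
    0 ≤ p.wWeight w :=
  List.sum_nonneg (by simp [hw])

theorem wWeight_congr {w w' : V → V → ℝ} {u v : V} (p : G.Walk u v)
    (h : ∀ a b, s(a, b) ∈ p.edges → w a b = w' a b) : p.wWeight w = p.wWeight w' := by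
  induction p with
  | nil => rfl
  | cons hadj p ih =>
    simp only [wWeight_cons, edges_cons, List.mem_cons] at h ⊢
    rw [h _ _ (.inl rfl), ih fun a b hab => h a b (.inr hab)]

theorem support_subset_of_adj_mem {s : Set V} (hs : ∀ ⦃a b⦄, G.Adj a b → a ∈ s) {u v : V}
    (p : G.Walk u v) (hu : u ∈ s) : ∀ z ∈ p.support, z ∈ s := by
  induction p with
  | nil => simpa using hu
  | cons hadj p ih =>
    simp only [support_cons, List.mem_cons, forall_eq_or_imp]
    exact ⟨hu, ih (hs hadj.symm)⟩

theorem IsPath.append {u v z : V} {p : G.Walk u v} {q : G.Walk v z} (hp : p.IsPath)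
    (hq : q.IsPath) (h : ∀ a ∈ p.support, a ∈ q.support → a = v) : (p.append q).IsPath := by
  rw [isPath_def, support_append, List.nodup_append]
  refine ⟨hp.support_nodup, hq.support_nodup.tail, fun a ha b hb hab => ?_⟩
  subst hab
  obtain rfl := h a ha (List.mem_of_mem_tail hb)
  have hnd := hq.support_nodup
  rw [← cons_tail_support] at hnd
  exact (List.nodup_cons.1 hnd).1 hb

theorem IsPath.eq_cons_nil_of_mem_edges {x c : V} {p : G.Walk x c} (hp : p.IsPath)
    (h : s(x, c) ∈ p.edges) : ∃ hxc : G.Adj x c, p = cons hxc Walk.nil := by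
  cases p with
  | nil => simp at h
  | cons hxb q =>
    rw [cons_isPath_iff] at hp
    rw [edges_cons, List.mem_cons] at h
    rcases h with h | h
    · obtain rfl := Sym2.congr_right.1 h
      obtain rfl := (isPath_iff_nil.1 hp.1).eq_nil
      exact ⟨hxb, rfl⟩
    · exact absurd (q.fst_mem_support_of_mem_edges h) hp.2

end Walk

def ReachIn (G : SimpleGraph V) (A : Set V) (u v : V) : Prop :=
  ∃ p : G.Walk u v, ∀ z ∈ p.support, z ∈ A

def ConnectedIn (G : SimpleGraph V) (A : Set V) : Prop :=
  ∀ u ∈ A, ∀ v ∈ A, G.ReachIn A u v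

namespace ReachIn

variable {G H : SimpleGraph V} {A B : Set V} {u v z : V}

theorem refl (hu : u ∈ A) : G.ReachIn A u u :=
  ⟨.nil, by simpa using hu⟩

theorem of_adj (h : G.Adj u v) (hu : u ∈ A) (hv : v ∈ A) : G.ReachIn A u v :=
  ⟨.cons h .nil, by simp [hu, hv]⟩

theorem right_mem (h : G.ReachIn A u v) : v ∈ A :=
  h.elim fun p hp => hp v p.end_mem_support

theorem symm (h : G.ReachIn A u v) : G.ReachIn A v u :=
  h.elim fun p hp => ⟨p.reverse, fun z hz => hp z (by simpa using hz)⟩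

theorem trans (h₁ : G.ReachIn A u v) (h₂ : G.ReachIn A v z) : G.ReachIn A u z := by
  obtain ⟨p, hp⟩ := h₁
  obtain ⟨q, hq⟩ := h₂
  refine ⟨p.append q, fun a ha => ?_⟩
  rcases Walk.mem_support_append_iff p q |>.1 ha with ha | ha
  exacts [hp a ha, hq a ha]

theorem mono (hAB : A ⊆ B) (h : G.ReachIn A u v) : G.ReachIn B u v :=
  h.elim fun p hp => ⟨p, fun z hz => hAB (hp z hz)⟩

theorem mono_graph (hGH : ∀ a ∈ A, ∀ b ∈ A, G.Adj a b → H.Adj a b) (h : G.ReachIn A u v) :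
    H.ReachIn A u v := by
  obtain ⟨p, hp⟩ := h
  have hedges : ∀ e ∈ p.edges, e ∈ H.edgeSet := by
    rintro ⟨a, b⟩ he
    exact hGH a (hp a (p.fst_mem_support_of_mem_edges he)) b
      (hp b (p.snd_mem_support_of_mem_edges he)) (p.adj_of_mem_edges he)
  exact ⟨p.transfer H hedges, by simpa using hp⟩

theorem restrict_reachable (h : G.ReachIn A u v) : G.ReachIn {z | G.ReachIn A u z} u v := by
  classical
  obtain ⟨p, hp⟩ := h
  exact ⟨p, fun z hz =>
    ⟨p.takeUntil z hz, fun a ha => hp a (p.support_takeUntil_subset_support hz ha)⟩⟩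

end ReachIn

theorem ConnectedIn.of_reachIn {G : SimpleGraph V} {A : Set V} {h : V}
    (hA : ∀ u ∈ A, G.ReachIn A u h) : G.ConnectedIn A :=
  fun u hu v hv => (hA u hu).trans (hA v hv).symm

theorem Walk.exists_reachIn_adj_notMem {G : SimpleGraph V} {A : Set V} {u z : V}
    (p : G.Walk u z) (hu : u ∈ A) (hz : z ∉ A) :
    ∃ k t, G.ReachIn A u k ∧ G.Adj k t ∧ t ∉ A ∧ t ∈ p.support := by
  induction p with
  | nil => exact absurd hu hz
  | @cons a b _ hab p ih =>
    by_cases hb : b ∈ A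
    · obtain ⟨k, t, hk, hkt, htA, htp⟩ := ih hb hz
      exact ⟨k, t, (ReachIn.of_adj hab hu hb).trans hk, hkt, htA, by simp [htp]⟩
    · exact ⟨a, b, .refl hu, hab, hb, by simp⟩

structure TwoConnectedOn (G : SimpleGraph V) (s : Finset V) : Prop where
  adj_mem : ∀ ⦃u v⦄, G.Adj u v → u ∈ s
  three_le_card : 3 ≤ s.card
  connectedIn_diff : ∀ v ∈ s, G.ConnectedIn (↑s \ {v})

theorem TwoConnected.twoConnectedOn_univ [Fintype V] {G : SimpleGraph V} (h : G.TwoConnected) :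
    G.TwoConnectedOn Finset.univ where
  adj_mem _ _ _ := Finset.mem_univ _
  three_le_card := by simpa [Nat.card_eq_fintype_card] using h.1
  connectedIn_diff v _ u hu u' hu' := by
    obtain ⟨p⟩ := (h.2 v).preconnected ⟨u, by simpa using hu⟩ ⟨u', by simpa using hu'⟩
    refine ⟨p.map (Embedding.induce _).toHom, fun z hz => ?_⟩
    obtain ⟨⟨z, hzv⟩, -, rfl⟩ := List.mem_map.1 (Walk.support_map _ p ▸ hz)
    simpa using hzv

namespace TwoConnectedOn

variable {G : SimpleGraph V} {s : Finset V} {x y : V} {w : V → V → ℝ} {d : ℝ}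

theorem exists_mem_ne_ne (hs : G.TwoConnectedOn s) (x y : V) : ∃ z ∈ s, z ≠ x ∧ z ≠ y := by
  classical
  have h2 : 1 < (s.erase x).card := by
    have := Finset.pred_card_le_card_erase (a := x) (s := s)
    have := hs.three_le_card
    omega
  obtain ⟨z, hz, hzy⟩ := Finset.exists_mem_ne h2 y
  exact ⟨z, Finset.mem_of_mem_erase hz, Finset.ne_of_mem_erase hz, hzy⟩

theorem exists_adj_ne (hs : G.TwoConnectedOn s) (hx : x ∈ s) (hy : y ∈ s) (hxy : x ≠ y) :
    ∃ b, G.Adj x b ∧ b ≠ y := by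
  obtain ⟨z, hz, hzx, hzy⟩ := hs.exists_mem_ne_ne x y
  obtain ⟨p, hp⟩ := hs.connectedIn_diff y hy x ⟨hx, hxy⟩ z ⟨hz, hzy⟩
  cases p with
  | nil => exact absurd rfl hzx
  | cons hxb q =>
    exact ⟨_, hxb, (hp _ (by simp)).2⟩

theorem exists_isPath (hs : G.TwoConnectedOn s) (hx : x ∈ s) (hy : y ∈ s) :
    ∃ p : G.Walk x y, p.IsPath := by
  classical
  obtain ⟨z, hz, hzx, hzy⟩ := hs.exists_mem_ne_ne x y
  obtain ⟨p, -⟩ := hs.connectedIn_diff z hz x ⟨hx, hzx.symm⟩ y ⟨hy, hzy.symm⟩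
  exact ⟨p.bypass, p.bypass_isPath⟩

theorem exists_heavy_path_of_card_eq_three (hs : G.TwoConnectedOn s)
    (hsymm : ∀ u v, w u v = w v u) (hcard : s.card = 3) (hx : x ∈ s) (hy : y ∈ s) (hxy : x ≠ y)
    (hd : ∀ v ∈ s, v ≠ x → v ≠ y → d ≤ G.wDeg w v) :
    ∃ p : G.Walk x y, p.IsPath ∧ d ≤ p.wWeight w := by
  classical
  obtain ⟨z, hz, hzx, hzy⟩ := hs.exists_mem_ne_ne x y
  have hsxyz : s = {x, y, z} := by
    refine (Finset.eq_of_subset_of_card_le (by simp [Finset.insert_subset_iff, hx, hy, hz]) ?_).symm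
    rw [hcard, Finset.card_insert_of_notMem (by simp [hxy, hzx.symm]),
      Finset.card_pair hzy.symm]
  have hthird : ∀ b, G.Adj x b ∨ G.Adj y b → b ≠ x → b ≠ y → b = z := by
    intro b hb hbx hby
    have hbs : b ∈ s := hb.elim (fun h => hs.adj_mem h.symm) (fun h => hs.adj_mem h.symm)
    simpa [hsxyz, hbx, hby] using hbs
  have hxz : G.Adj x z := by
    obtain ⟨b, hxb, hby⟩ := hs.exists_adj_ne hx hy hxy
    rwa [← hthird b (.inl hxb) hxb.ne.symm hby]
  have hyz : G.Adj y z := by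
    obtain ⟨b, hyb, hbx⟩ := hs.exists_adj_ne hy hx hxy.symm
    rwa [← hthird b (.inr hyb) hbx hyb.ne.symm]
  have hN : {u | G.Adj z u} = {x, y} := by
    ext u
    refine ⟨fun hzu => ?_, by rintro (rfl | rfl); exacts [hxz.symm, hyz.symm]⟩
    have hus : u ∈ s := hs.adj_mem hzu.symm
    simp only [hsxyz, Finset.mem_insert, Finset.mem_singleton] at hus
    rcases hus with rfl | rfl | rfl
    exacts [.inl rfl, .inr rfl, absurd rfl hzu.ne]
  refine ⟨.cons hxz (.cons hyz.symm .nil), by simp [hxy, hzx.symm, hzy], ?_⟩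
  have hdz := hd z hz hzx hzy
  rw [wDeg, hN, finsum_mem_pair hxy] at hdz
  simpa [hsymm x z] using hdz

end TwoConnectedOn

variable (V) in
def HeavyPathsBelow (n : ℕ) : Prop :=
  ∀ (s : Finset V) (G : SimpleGraph V) (w : V → V → ℝ), s.card < n →
    (∀ u v, w u v = w v u) → (∀ u v, 0 ≤ w u v) → G.TwoConnectedOn s →
    ∀ x ∈ s, ∀ y ∈ s, x ≠ y → ∀ d : ℝ, (∀ v ∈ s, v ≠ x → v ≠ y → d ≤ G.wDeg w v) →
    ∃ p : G.Walk x y, p.IsPath ∧ d ≤ p.wWeight w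

open Classical in
theorem wDeg_eq_sum {G : SimpleGraph V} {s : Finset V} {v : V} (hs : ∀ u, G.Adj v u → u ∈ s)
    (w : V → V → ℝ) : G.wDeg w v = ∑ u ∈ s, if G.Adj v u then w v u else 0 := by
  have hN : {u | G.Adj v u} = ↑(s.filter (G.Adj v)) := by
    ext u
    simpa using fun h => hs u h
  rw [wDeg, hN, finsum_mem_coe_finset, Finset.sum_filter]

section Contract

variable {G : SimpleGraph V} {s : Finset V} {x a y : V} {w : V → V → ℝ}

/-- Contraction of the edge `xa` onto `x`; `a` becomes an isolated vertex. -/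
def contract (G : SimpleGraph V) (x a : V) : SimpleGraph V where
  Adj u v := u ≠ v ∧ u ≠ a ∧ v ≠ a ∧ (G.Adj u v ∨ u = x ∧ G.Adj a v ∨ v = x ∧ G.Adj a u)
  symm := ⟨by
    rintro u v ⟨huv, hu, hv, h | h | h⟩
    exacts [⟨huv.symm, hv, hu, .inl h.symm⟩, ⟨huv.symm, hv, hu, .inr (.inr h)⟩,
      ⟨huv.symm, hv, hu, .inr (.inl h)⟩]⟩
  loopless := ⟨fun _ h => h.1 rfl⟩

@[simp]
theorem contract_adj {u v : V} : (G.contract x a).Adj u v ↔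
    u ≠ v ∧ u ≠ a ∧ v ≠ a ∧ (G.Adj u v ∨ u = x ∧ G.Adj a v ∨ v = x ∧ G.Adj a u) :=
  Iff.rfl

open Classical in
/-- The contracted edge `xv` carries the weight of the path `x a v` when `a ~ v`. -/
noncomputable def contractWeight (G : SimpleGraph V) (w : V → V → ℝ) (x a u v : V) : ℝ :=
  if u = x then (if G.Adj a v then w x a + w a v else w x v)
  else if v = x then (if G.Adj a u then w x a + w a u else w x u)
  else w u v

theorem contractWeight_symm (hsymm : ∀ u v, w u v = w v u) (u v : V) :
    G.contractWeight w x a u v = G.contractWeight w x a v u := by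
  unfold contractWeight
  by_cases hu : u = x <;> by_cases hv : v = x
  · rw [hu, hv]
  all_goals simp [hu, hv, hsymm u v]

theorem contractWeight_nonneg (hnn : ∀ u v, 0 ≤ w u v) (u v : V) :
    0 ≤ G.contractWeight w x a u v := by
  unfold contractWeight
  split_ifs <;> first | exact hnn _ _ | exact add_nonneg (hnn _ _) (hnn _ _)

theorem contractWeight_of_ne {u v : V} (hu : u ≠ x) (hv : v ≠ x) :
    G.contractWeight w x a u v = w u v := by
  simp [contractWeight, hu, hv]

/-- A path of `G - v` from `u` to `x` first leaves `s \ {v, x, a}` into `x` or `a`, both adjacent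
to `x` after the contraction. -/
theorem TwoConnectedOn.reachIn_contract_diff [DecidableEq V] (hs : G.TwoConnectedOn s)
    (hx : x ∈ s) (hxa : G.Adj x a) {v u : V} (hv : v ∈ s.erase a) (hvx : v ≠ x)
    (hu : u ∈ (↑(s.erase a) \ {v} : Set V)) :
    (G.contract x a).ReachIn (↑(s.erase a) \ {v}) u x := by
  have hxB : x ∈ (↑(s.erase a) \ {v} : Set V) := by simp [hx, hxa.ne, Ne.symm hvx]
  by_cases hux : u = x
  · subst hux
    exact .refl hxB
  obtain ⟨p, hp⟩ := hs.connectedIn_diff v (Finset.mem_of_mem_erase hv) u (by simp_all) x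
    (by simp [hx, Ne.symm hvx])
  obtain ⟨k, t, hk, hkt, htB, htp⟩ :=
    p.exists_reachIn_adj_notMem (A := ↑s \ {v, x, a}) (by simp_all) (by simp)
  have hkB := hk.right_mem
  simp only [Set.mem_sdiff, Finset.mem_coe, Set.mem_insert_iff, Set.mem_singleton_iff,
    not_or] at hkB
  have hkx : (G.contract x a).Adj k x := by
    have htxa : t = x ∨ t = a := by
      have := hp t htp
      simp only [Set.mem_sdiff, Finset.mem_coe, Set.mem_insert_iff, Set.mem_singleton_iff]
        at htB this
      tauto
    refine ⟨hkB.2.2.1, hkB.2.2.2, hxa.ne, ?_⟩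
    rcases htxa with rfl | rfl
    exacts [.inl hkt, .inr (.inr ⟨rfl, hkt.symm⟩)]
  refine ((hk.mono_graph fun b hb c hc hbc => ?_).mono fun z hz => ?_).trans
    (.of_adj hkx (by simp [hkB]) hxB)
  · simp only [Set.mem_sdiff, Finset.mem_coe, Set.mem_insert_iff, Set.mem_singleton_iff,
      not_or] at hb hc
    exact ⟨hbc.ne, hb.2.2.2, hc.2.2.2, .inl hbc⟩
  · simp only [Set.mem_sdiff, Finset.mem_coe, Set.mem_insert_iff, Set.mem_singleton_iff,
      not_or] at hz
    simp [hz]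

theorem TwoConnectedOn.contract [DecidableEq V] (hs : G.TwoConnectedOn s) (h4 : 4 ≤ s.card)
    (hx : x ∈ s) (hxa : G.Adj x a) (hsep : G.ConnectedIn (↑s \ {x, a})) :
    (G.contract x a).TwoConnectedOn (s.erase a) where
  adj_mem u v := by
    rw [contract_adj]
    rintro ⟨-, hua, -, h | ⟨rfl, -⟩ | ⟨-, h⟩⟩
    exacts [Finset.mem_erase.2 ⟨hua, hs.adj_mem h⟩, Finset.mem_erase.2 ⟨hua, hx⟩,
      Finset.mem_erase.2 ⟨hua, hs.adj_mem h.symm⟩]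
  three_le_card := by
    rw [Finset.card_erase_of_mem (hs.adj_mem hxa.symm)]
    omega
  connectedIn_diff v hv := by
    by_cases hvx : v = x
    · subst hvx
      have hA : (↑(s.erase a) \ {v} : Set V) = ↑s \ {v, a} := by
        ext
        simp only [Finset.coe_erase, Set.mem_sdiff, Set.mem_insert_iff, Set.mem_singleton_iff]
        tauto
      rw [hA]
      intro u₁ hu₁ u₂ hu₂
      refine (hsep u₁ hu₁ u₂ hu₂).mono_graph fun b hb c hc hbc => ?_
      simp only [Set.mem_sdiff, Set.mem_insert_iff, Set.mem_singleton_iff, not_or] at hb hc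
      exact ⟨hbc.ne, hb.2.2, hc.2.2, .inl hbc⟩
    · exact ConnectedIn.of_reachIn fun u hu => hs.reachIn_contract_diff hx hxa hv hvx hu

theorem wDeg_le_wDeg_contract (hs : ∀ ⦃u v⦄, G.Adj u v → u ∈ s) (hsymm : ∀ u v, w u v = w v u)
    (hnn : ∀ u v, 0 ≤ w u v) (hx : x ∈ s) (ha : a ∈ s) (hxa : x ≠ a) {v : V} (hvx : v ≠ x)
    (hva : v ≠ a) (hmax : G.Adj x v → w x v ≤ w x a) :
    G.wDeg w v ≤ (G.contract x a).wDeg (G.contractWeight w x a) v := by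
  classical
  have hN : ∀ u, (G.contract x a).Adj v u → u ∈ s := by
    rintro u ⟨-, -, -, h | ⟨h, -⟩ | ⟨rfl, -⟩⟩
    exacts [hs h.symm, absurd h hvx, hx]
  rw [wDeg_eq_sum (fun u h => hs h.symm), wDeg_eq_sum hN]
  refine Finset.sum_le_sum_of_eq_of_ne_pair ha hx hxa.symm (fun u _ hua hux => ?_) ?_
  · have hadj : (G.contract x a).Adj v u ↔ G.Adj v u := by
      simp only [contract_adj]
      exact ⟨by tauto, fun h => ⟨h.ne, hva, hua, .inl h⟩⟩
    simp only [hadj, contractWeight_of_ne hvx hux]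
  · have hcx : (G.contract x a).Adj v x ↔ G.Adj v x ∨ G.Adj a v := by
      rw [contract_adj]
      exact ⟨by tauto, fun h => ⟨hvx, hva, hxa, h.elim .inl fun h => .inr (.inr ⟨rfl, h⟩)⟩⟩
    have hwx : G.contractWeight w x a v x = if G.Adj a v then w x a + w a v else w x v := by
      simp [contractWeight, hvx]
    have hna : ¬ (G.contract x a).Adj v a := fun h => h.2.2.1 rfl
    simp only [hcx, hwx, hna, G.adj_comm v a, if_false, zero_add]
    by_cases hav : G.Adj a v <;> by_cases hvx' : G.Adj v x
    all_goals simp only [hav, hvx', or_true, or_false, if_true, if_false]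
    · linarith [hmax hvx'.symm, hsymm x v, hsymm a v]
    · linarith [hnn x a, hsymm a v]
    · linarith [hsymm x v]
    · simp

theorem exists_isPath_wWeight_eq_of_contract (hxa : G.Adj x a) (hxy : x ≠ y)
    (Q : (G.contract x a).Walk x y) (hQ : Q.IsPath) :
    ∃ p : G.Walk x y, p.IsPath ∧ p.wWeight w = Q.wWeight (G.contractWeight w x a) := by
  cases Q with
  | nil => exact absurd rfl hxy
  | @cons _ b _ hxb R =>
    obtain ⟨hR, hxR⟩ := (Walk.cons_isPath_iff _ _).1 hQ
    have hbx : b ≠ x := hxb.ne.symm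
    have hRx : ∀ z ∈ R.support, z ≠ x := fun z hz h => hxR (h ▸ hz)
    have hRa : a ∉ R.support := fun h =>
      R.support_subset_of_adj_mem (s := {z | z ≠ a})
        (fun _ _ (h : (G.contract x a).Adj _ _) => h.2.1) hxb.2.2.1 a h rfl
    have hRG : ∀ e ∈ R.edges, e ∈ G.edgeSet := by
      rintro ⟨u, v⟩ he
      obtain ⟨-, -, -, h | ⟨h, -⟩ | ⟨h, -⟩⟩ := R.adj_of_mem_edges he
      exacts [h, absurd h (hRx u (R.fst_mem_support_of_mem_edges he)),
        absurd h (hRx v (R.snd_mem_support_of_mem_edges he))]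
    have hRw : R.wWeight (G.contractWeight w x a) = R.wWeight w :=
      R.wWeight_congr fun u v he => contractWeight_of_ne
        (hRx u (R.fst_mem_support_of_mem_edges he)) (hRx v (R.snd_mem_support_of_mem_edges he))
    have hR' : (R.transfer G hRG).IsPath := hR.transfer hRG
    by_cases hab : G.Adj a b
    · refine ⟨.cons hxa (.cons hab (R.transfer G hRG)), ?_, ?_⟩
      · simp [Walk.cons_isPath_iff, hR', hRa, hxa.ne, hxR]
      · simp [hRw, contractWeight, hab, add_assoc]
    · have hxb' : G.Adj x b := by
        obtain ⟨-, -, -, h | ⟨-, h⟩ | ⟨h, -⟩⟩ := hxb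
        exacts [h, absurd h hab, absurd h hbx]
      refine ⟨.cons hxb' (R.transfer G hRG), ?_, ?_⟩
      · simp [Walk.cons_isPath_iff, hR', hxR]
      · simp [hRw, contractWeight, hab]

theorem TwoConnectedOn.exists_heavy_path_of_contract (ih : HeavyPathsBelow V s.card)
    (hs : G.TwoConnectedOn s) (hsymm : ∀ u v, w u v = w v u) (hnn : ∀ u v, 0 ≤ w u v)
    (h4 : 4 ≤ s.card) (hx : x ∈ s) (hy : y ∈ s) (hxy : x ≠ y) {d : ℝ}
    (hd : ∀ v ∈ s, v ≠ x → v ≠ y → d ≤ G.wDeg w v)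
    (hsep : ∀ c ∈ s, c ≠ x → G.ConnectedIn (↑s \ {x, c})) :
    ∃ p : G.Walk x y, p.IsPath ∧ d ≤ p.wWeight w := by
  classical
  obtain ⟨b, hxb, hby⟩ := hs.exists_adj_ne hx hy hxy
  obtain ⟨a, ha, hmax⟩ := (s.filter fun u => G.Adj x u ∧ u ≠ y).exists_max_image (w x)
    ⟨b, Finset.mem_filter.2 ⟨hs.adj_mem hxb.symm, hxb, hby⟩⟩
  obtain ⟨has, hxa, hay⟩ := Finset.mem_filter.1 ha
  have hd' : ∀ v ∈ s.erase a, v ≠ x → v ≠ y →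
      d ≤ (G.contract x a).wDeg (G.contractWeight w x a) v := by
    intro v hv hvx hvy
    have hvs := Finset.mem_of_mem_erase hv
    exact (hd v hvs hvx hvy).trans <| wDeg_le_wDeg_contract hs.adj_mem hsymm hnn hx has hxa.ne
      hvx (Finset.ne_of_mem_erase hv) fun hxv => hmax v (Finset.mem_filter.2 ⟨hvs, hxv, hvy⟩)
  obtain ⟨Q, hQ, hdQ⟩ := ih (s.erase a) (G.contract x a) (G.contractWeight w x a)
    (Finset.card_erase_lt_of_mem has) (contractWeight_symm hsymm) (contractWeight_nonneg hnn)
    (hs.contract h4 hx hxa (hsep a has hxa.ne.symm)) x (Finset.mem_erase.2 ⟨hxa.ne, hx⟩)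
    y (Finset.mem_erase.2 ⟨hay.symm, hy⟩) hxy d hd'
  obtain ⟨p, hp, hpQ⟩ := exists_isPath_wWeight_eq_of_contract (w := w) hxa hxy Q hQ
  exact ⟨p, hp, hpQ ▸ hdQ⟩

end Contract

section Cut

variable {G : SimpleGraph V} {w : V → V → ℝ}

def cutGraph (G : SimpleGraph V) (T : Set V) (x c : V) : SimpleGraph V where
  Adj u v := G.Adj u v ∧ u ∈ T ∧ v ∈ T ∨ (edge x c).Adj u v
  symm := ⟨by
    rintro u v (⟨h, hu, hv⟩ | h)
    exacts [.inl ⟨h.symm, hv, hu⟩, .inr h.symm]⟩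
  loopless := ⟨by
    rintro u (⟨h, -⟩ | h)
    exacts [h.ne rfl, h.ne rfl]⟩

@[simp]
theorem cutGraph_adj {T : Set V} {x c u v : V} :
    (G.cutGraph T x c).Adj u v ↔ G.Adj u v ∧ u ∈ T ∧ v ∈ T ∨ (edge x c).Adj u v :=
  Iff.rfl

open Classical in
noncomputable def adjWeight (G : SimpleGraph V) (w : V → V → ℝ) (u v : V) : ℝ :=
  if G.Adj u v then w u v else 0

theorem adjWeight_of_adj {u v : V} (h : G.Adj u v) : G.adjWeight w u v = w u v :=
  if_pos h

theorem adjWeight_symm (hsymm : ∀ u v, w u v = w v u) (u v : V) :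
    G.adjWeight w u v = G.adjWeight w v u := by
  unfold adjWeight
  rw [G.adj_comm u v, hsymm u v]

theorem adjWeight_nonneg (hnn : ∀ u v, 0 ≤ w u v) (u v : V) : 0 ≤ G.adjWeight w u v := by
  unfold adjWeight
  split_ifs
  exacts [hnn u v, le_rfl]

/-- The new edge `xc` weighs `0` unless it is an edge of `G`, and a path from `x` to `c` through
it has no other edge. -/
theorem exists_isPath_of_cutGraph {T : Set V} {x c : V} (Q : (G.cutGraph T x c).Walk x c)
    (hQ : Q.IsPath) (hpos : 0 < Q.wWeight (G.adjWeight w)) :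
    ∃ q : G.Walk x c, q.IsPath ∧ q.support = Q.support ∧
      q.wWeight w = Q.wWeight (G.adjWeight w) := by
  have hE : ∀ e ∈ Q.edges, e ∈ G.edgeSet := by
    rintro ⟨u, v⟩ he
    rcases Q.adj_of_mem_edges he with ⟨h, -⟩ | h
    · exact h
    · have hxc : s(u, v) = s(x, c) := by
        rw [edge_adj] at h
        rcases h.1 with ⟨rfl, rfl⟩ | ⟨rfl, rfl⟩
        exacts [rfl, Sym2.eq_swap]
      obtain ⟨hQxc, rfl⟩ := hQ.eq_cons_nil_of_mem_edges (hxc ▸ he)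
      change s(u, v) ∈ G.edgeSet
      rw [hxc]
      by_contra hGxc
      rw [mem_edgeSet] at hGxc
      simp [adjWeight, hGxc] at hpos
  refine ⟨Q.transfer G hE, hQ.transfer hE, by simp, ?_⟩
  rw [Walk.wWeight_transfer]
  exact Q.wWeight_congr fun u v he => (adjWeight_of_adj (hE _ he)).symm

variable {s : Finset V} {x c u₀ u₁ y : V}

open Classical in
noncomputable def cutSide (G : SimpleGraph V) (s : Finset V) (x c u₀ : V) : Finset V :=
  s.filter fun u => u = x ∨ u = c ∨ G.ReachIn (↑s \ {x, c}) u₀ u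

theorem mem_cutSide {u : V} :
    u ∈ G.cutSide s x c u₀ ↔ u ∈ s ∧ (u = x ∨ u = c ∨ G.ReachIn (↑s \ {x, c}) u₀ u) := by
  simp [cutSide]

theorem mem_cutSide_of_reachIn {u : V} (h : G.ReachIn (↑s \ {x, c}) u₀ u) :
    u ∈ G.cutSide s x c u₀ :=
  mem_cutSide.2 ⟨h.right_mem.1, .inr (.inr h)⟩

theorem TwoConnectedOn.exists_reachIn_adj (hs : G.TwoConnectedOn s) (hx : x ∈ s)
    (hu₀ : u₀ ∈ (↑s \ {x, c} : Set V)) (hu₁ : u₁ ∈ (↑s \ {x, c} : Set V))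
    (h₀₁ : ¬ G.ReachIn (↑s \ {x, c}) u₀ u₁) :
    ∃ k, G.ReachIn (↑s \ {x, c}) u₀ k ∧ G.Adj k c := by
  obtain ⟨p, hp⟩ := hs.connectedIn_diff x hx u₀ (by simp_all) u₁ (by simp_all)
  obtain ⟨k, t, hk, hkt, ht, htp⟩ :=
    p.exists_reachIn_adj_notMem (A := {z | G.ReachIn (↑s \ {x, c}) u₀ z}) (.refl hu₀) h₀₁
  refine ⟨k, hk.right_mem, ?_⟩
  by_cases htc : t = c
  · exact htc ▸ hkt
  · have htA : t ∈ (↑s \ {x, c} : Set V) := by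
      have := hp t htp
      simp_all
    exact absurd (hk.right_mem.trans (.of_adj hkt hk.right_mem.right_mem htA)) ht

theorem cutSide_subset : G.cutSide s x c u₀ ⊆ s := fun _ h => (mem_cutSide.1 h).1

theorem card_cutSide_lt (hu₁ : u₁ ∈ (↑s \ {x, c} : Set V))
    (h₀₁ : ¬ G.ReachIn (↑s \ {x, c}) u₀ u₁) : (G.cutSide s x c u₀).card < s.card := by
  refine Finset.card_lt_card ((Finset.ssubset_iff_of_subset cutSide_subset).2
    ⟨u₁, hu₁.1, fun h => ?_⟩)
  have := hu₁.2
  rcases (mem_cutSide.1 h).2 with rfl | rfl | h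
  exacts [this (.inl rfl), this (.inr rfl), h₀₁ h]

theorem three_le_card_cutSide (hx : x ∈ s) (hc : c ∈ s) (hcx : c ≠ x)
    (hu₀ : u₀ ∈ (↑s \ {x, c} : Set V)) : 3 ≤ (G.cutSide s x c u₀).card := by
  classical
  have hu₀' : u₀ ≠ x ∧ u₀ ≠ c := by simpa using hu₀.2
  calc 3 = ({x, c, u₀} : Finset V).card := by
        rw [Finset.card_insert_of_notMem (by simp [hcx.symm, hu₀'.1.symm]),
          Finset.card_pair hu₀'.2.symm]
    _ ≤ _ := Finset.card_le_card <| by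
        simp [Finset.insert_subset_iff, mem_cutSide, hx, hc, mem_cutSide_of_reachIn (.refl hu₀)]

theorem reachIn_cutGraph_of_adj {B : Set V} {q k u : V}
    (hBT : B ⊆ ↑(G.cutSide s x c u₀)) (hKB : {z | G.ReachIn (↑s \ {x, c}) u₀ z} ⊆ B)
    (hqB : q ∈ B) (hk : G.ReachIn (↑s \ {x, c}) u₀ k) (hkq : G.Adj k q)
    (hu : G.ReachIn (↑s \ {x, c}) u₀ u) :
    (G.cutGraph ↑(G.cutSide s x c u₀) x c).ReachIn B u q := by
  have hGH : ∀ a ∈ B, ∀ b ∈ B, G.Adj a b → (G.cutGraph ↑(G.cutSide s x c u₀) x c).Adj a b :=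
    fun a ha b hb h => .inl ⟨h, hBT ha, hBT hb⟩
  have huk := hu.restrict_reachable.symm.trans hk.restrict_reachable
  exact ((huk.mono hKB).mono_graph hGH).trans (.of_adj (hGH k (hKB hk) q hqB hkq) (hKB hk) hqB)

/-- A path of `G - v` from `u` to `x` leaves the component of `u₀` through `x` or `c`. -/
theorem TwoConnectedOn.reachIn_cutGraph_diff (hs : G.TwoConnectedOn s) (hx : x ∈ s)
    (hc : c ∈ s) (hcx : c ≠ x) {v u : V} (hv : G.ReachIn (↑s \ {x, c}) u₀ v)
    (hu : u ∈ (↑(G.cutSide s x c u₀) \ {v} : Set V)) :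
    (G.cutGraph ↑(G.cutSide s x c u₀) x c).ReachIn (↑(G.cutSide s x c u₀) \ {v}) u x := by
  set T := G.cutSide s x c u₀
  have hvxc : v ≠ x ∧ v ≠ c := by simpa using hv.right_mem.2
  have hxB : x ∈ (↑T \ {v} : Set V) := ⟨mem_cutSide.2 ⟨hx, .inl rfl⟩, hvxc.1.symm⟩
  have hcB : c ∈ (↑T \ {v} : Set V) :=
    ⟨mem_cutSide.2 ⟨hc, .inr (.inl rfl)⟩, hvxc.2.symm⟩
  have hGH : ∀ a ∈ (↑T \ {v} : Set V), ∀ b ∈ (↑T \ {v} : Set V), G.Adj a b →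
      (G.cutGraph ↑T x c).Adj a b :=
    fun a ha b hb h => .inl ⟨h, ha.1, hb.1⟩
  have hcx' : (G.cutGraph ↑T x c).Adj c x := .inr (by simp [edge_adj, hcx])
  rcases (mem_cutSide.1 hu.1).2 with rfl | rfl | huK
  · exact .refl hu
  · exact .of_adj hcx' hu hxB
  obtain ⟨p, hp⟩ :=
    hs.connectedIn_diff v hv.right_mem.1 u ⟨huK.right_mem.1, hu.2⟩ x ⟨hx, hvxc.1.symm⟩
  obtain ⟨k, t, hk, hkt, ht, htp⟩ :=
    p.exists_reachIn_adj_notMem (A := {z | G.ReachIn (↑s \ {x, c}) u₀ z} \ {v}) ⟨huK, hu.2⟩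
      fun h => h.1.right_mem.2 (.inl rfl)
  have hkB : k ∈ (↑T \ {v} : Set V) := ⟨mem_cutSide_of_reachIn hk.right_mem.1, hk.right_mem.2⟩
  have huk : (G.cutGraph ↑T x c).ReachIn (↑T \ {v}) u k :=
    (hk.mono (B := ↑T \ {v}) fun z hz => ⟨mem_cutSide_of_reachIn hz.1, hz.2⟩).mono_graph hGH
  have htxc : t = x ∨ t = c := by
    by_contra htxc
    have htA : t ∈ (↑s \ {x, c} : Set V) := by
      have := (hp t htp).1
      simp_all
    exact ht ⟨hk.right_mem.1.trans (.of_adj hkt hk.right_mem.1.right_mem htA), (hp t htp).2⟩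
  rcases htxc with rfl | rfl
  · exact huk.trans (.of_adj (hGH k hkB t hxB hkt) hkB hxB)
  · exact (huk.trans (.of_adj (hGH k hkB t hcB hkt) hkB hcB)).trans (.of_adj hcx' hcB hxB)

theorem TwoConnectedOn.cutGraph_cutSide (hs : G.TwoConnectedOn s) (hx : x ∈ s) (hc : c ∈ s)
    (hcx : c ≠ x) (hu₀ : u₀ ∈ (↑s \ {x, c} : Set V)) (hu₁ : u₁ ∈ (↑s \ {x, c} : Set V))
    (h₀₁ : ¬ G.ReachIn (↑s \ {x, c}) u₀ u₁) :
    (G.cutGraph ↑(G.cutSide s x c u₀) x c).TwoConnectedOn (G.cutSide s x c u₀) where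
  adj_mem u v := by
    rintro (⟨-, hu, -⟩ | h)
    · exact hu
    · rcases ((edge_adj _ _ _ _).1 h).1 with ⟨rfl, -⟩ | ⟨rfl, -⟩
      exacts [mem_cutSide.2 ⟨hx, .inl rfl⟩, mem_cutSide.2 ⟨hc, .inr (.inl rfl)⟩]
  three_le_card := three_le_card_cutSide hx hc hcx hu₀
  connectedIn_diff v hv := by
    have hxT : x ∈ G.cutSide s x c u₀ := mem_cutSide.2 ⟨hx, .inl rfl⟩
    have hcT : c ∈ G.cutSide s x c u₀ := mem_cutSide.2 ⟨hc, .inr (.inl rfl)⟩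
    have hKT : ∀ q ∈ ({x, c} : Set V), {z | G.ReachIn (↑s \ {x, c}) u₀ z} ⊆
        ↑(G.cutSide s x c u₀) \ {q} :=
      fun q hq z hz => ⟨mem_cutSide_of_reachIn hz, fun h => hz.right_mem.2 (h ▸ hq)⟩
    rcases (mem_cutSide.1 hv).2 with hvx | hvc | hvK
    · subst v
      obtain ⟨k, hk, hkc⟩ := hs.exists_reachIn_adj hx hu₀ hu₁ h₀₁
      refine ConnectedIn.of_reachIn (h := c) fun u hu => ?_
      rcases (mem_cutSide.1 hu.1).2 with hux | rfl | huK
      · exact absurd hux hu.2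
      · exact .refl hu
      · exact reachIn_cutGraph_of_adj Set.sdiff_subset (hKT x (.inl rfl)) ⟨hcT, hcx⟩ hk hkc huK
    · subst v
      obtain ⟨k, hk, hkx⟩ := hs.exists_reachIn_adj (x := c) (c := x) (u₀ := u₀) (u₁ := u₁) hc
        (by rwa [Set.pair_comm]) (by rwa [Set.pair_comm]) (by rwa [Set.pair_comm])
      rw [Set.pair_comm] at hk
      refine ConnectedIn.of_reachIn (h := x) fun u hu => ?_
      rcases (mem_cutSide.1 hu.1).2 with rfl | huc | huK
      · exact .refl hu
      · exact absurd huc hu.2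
      · exact reachIn_cutGraph_of_adj Set.sdiff_subset (hKT c (.inr rfl)) ⟨hxT, hcx.symm⟩ hk
          hkx huK
    · exact ConnectedIn.of_reachIn fun u hu => hs.reachIn_cutGraph_diff hx hc hcx hvK hu

theorem wDeg_cutGraph_cutSide (hs : ∀ ⦃a b⦄, G.Adj a b → a ∈ s) {v : V}
    (hv : G.ReachIn (↑s \ {x, c}) u₀ v) :
    (G.cutGraph ↑(G.cutSide s x c u₀) x c).wDeg (G.adjWeight w) v = G.wDeg w v := by
  have hvxc : v ≠ x ∧ v ≠ c := by simpa using hv.right_mem.2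
  have hN : {u | (G.cutGraph ↑(G.cutSide s x c u₀) x c).Adj v u} = {u | G.Adj v u} := by
    ext u
    simp only [Set.mem_ofPred_eq, cutGraph_adj, edge_adj]
    refine ⟨by rintro (⟨h, -⟩ | ⟨⟨rfl, -⟩ | ⟨rfl, -⟩, -⟩) <;> simp_all, fun h => .inl ⟨h,
      mem_cutSide_of_reachIn hv, mem_cutSide.2 ⟨hs h.symm, ?_⟩⟩⟩
    by_contra! hu
    exact hu.2.2 (hv.trans (.of_adj h hv.right_mem (by simp [hs h.symm, hu.1, hu.2.1])))
  rw [wDeg, wDeg, hN]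
  exact finsum_mem_congr rfl fun u hu => adjWeight_of_adj hu

theorem TwoConnectedOn.exists_isPath_avoiding_cutSide (hs : G.TwoConnectedOn s) (hx : x ∈ s)
    (hc : c ∈ s) (hcx : c ≠ x) (hy : y ∈ s) (hyx : y ≠ x)
    (h₀y : ¬ G.ReachIn (↑s \ {x, c}) u₀ y) :
    ∃ r : G.Walk c y, r.IsPath ∧ ∀ z ∈ r.support, z ∈ G.cutSide s x c u₀ → z = c := by
  classical
  by_cases hyc : y = c
  · subst hyc
    exact ⟨.nil, .nil, by simp⟩
  set T := G.cutSide s x c u₀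
  have hyB : y ∈ (↑s \ ↑T : Set V) := ⟨hy, fun h => by
    rcases (mem_cutSide.1 h).2 with h | h | h
    exacts [hyx h, hyc h, h₀y h]⟩
  have hcT : c ∈ T := mem_cutSide.2 ⟨hc, .inr (.inl rfl)⟩
  obtain ⟨p, hp⟩ := hs.connectedIn_diff x hx y ⟨hy, hyx⟩ c ⟨hc, hcx⟩
  obtain ⟨k, t, hk, hkt, ht, htp⟩ := p.exists_reachIn_adj_notMem hyB fun h => h.2 hcT
  have htc : t = c := by
    have htT : t ∈ T := by_contra fun h => ht ⟨(hp t htp).1, h⟩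
    rcases (mem_cutSide.1 htT).2 with htx | htc | htK
    · exact absurd htx (hp t htp).2
    · exact htc
    · have hkT := hk.right_mem.2
      have hkA : k ∈ (↑s \ {x, c} : Set V) := ⟨hk.right_mem.1, by
        rintro (rfl | rfl)
        exacts [hkT (mem_cutSide.2 ⟨hx, .inl rfl⟩), hkT hcT]⟩
      exact absurd (mem_cutSide_of_reachIn (htK.trans (.of_adj hkt.symm htK.right_mem hkA))) hkT
  obtain ⟨r, hr⟩ := ((hk.mono Set.subset_union_left).trans
    (.of_adj (htc ▸ hkt) (.inl hk.right_mem) (.inr rfl))).symm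
  refine ⟨r.bypass, r.bypass_isPath, fun z hz hzT => ?_⟩
  rcases hr z (r.support_bypass_subset_support hz) with h | h
  exacts [absurd hzT h.2, h.symm]

theorem TwoConnectedOn.exists_heavy_path_of_cut (ih : HeavyPathsBelow V s.card)
    (hs : G.TwoConnectedOn s) (hsymm : ∀ u v, w u v = w v u) (hnn : ∀ u v, 0 ≤ w u v)
    (hx : x ∈ s) (hy : y ∈ s) (hxy : x ≠ y) {d : ℝ} (hd0 : 0 < d)
    (hd : ∀ v ∈ s, v ≠ x → v ≠ y → d ≤ G.wDeg w v) (hc : c ∈ s) (hcx : c ≠ x)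
    (hu₀ : u₀ ∈ (↑s \ {x, c} : Set V)) (hu₁ : u₁ ∈ (↑s \ {x, c} : Set V))
    (h₀₁ : ¬ G.ReachIn (↑s \ {x, c}) u₀ u₁) (h₀y : ¬ G.ReachIn (↑s \ {x, c}) u₀ y) :
    ∃ p : G.Walk x y, p.IsPath ∧ d ≤ p.wWeight w := by
  set T := G.cutSide s x c u₀
  have hxT : x ∈ T := mem_cutSide.2 ⟨hx, .inl rfl⟩
  have hT := hs.cutGraph_cutSide hx hc hcx hu₀ hu₁ h₀₁
  have hdT : ∀ v ∈ T, v ≠ x → v ≠ c → d ≤ (G.cutGraph ↑T x c).wDeg (G.adjWeight w) v := by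
    intro v hv hvx hvc
    have hvK : G.ReachIn (↑s \ {x, c}) u₀ v := by
      rcases (mem_cutSide.1 hv).2 with h | h | h
      exacts [absurd h hvx, absurd h hvc, h]
    rw [wDeg_cutGraph_cutSide hs.adj_mem hvK]
    exact hd v hvK.right_mem.1 hvx fun h => h₀y (h ▸ hvK)
  obtain ⟨Q, hQ, hdQ⟩ := ih T _ _ (card_cutSide_lt hu₁ h₀₁) (adjWeight_symm hsymm)
    (adjWeight_nonneg hnn) hT x hxT c (mem_cutSide.2 ⟨hc, .inr (.inl rfl)⟩) hcx.symm d hdT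
  obtain ⟨q, hq, hqQ, hqw⟩ := exists_isPath_of_cutGraph Q hQ (hd0.trans_le hdQ)
  obtain ⟨r, hr, hrT⟩ := hs.exists_isPath_avoiding_cutSide hx hc hcx hy hxy.symm h₀y
  refine ⟨q.append r, hq.append hr fun z hzq hzr => hrT z hzr ?_, ?_⟩
  · exact Q.support_subset_of_adj_mem (s := ↑T) hT.adj_mem hxT z (hqQ ▸ hzq)
  · rw [Walk.wWeight_append, hqw]
    linarith [r.wWeight_nonneg hnn]

end Cut

theorem exists_not_reachIn_of_not_connectedIn {G : SimpleGraph V} {A : Set V}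
    (h : ¬ G.ConnectedIn A) (y : V) :
    ∃ u₀ ∈ A, ∃ u₁ ∈ A, ¬ G.ReachIn A u₀ u₁ ∧ ¬ G.ReachIn A u₀ y := by
  simp only [ConnectedIn, not_forall] at h
  obtain ⟨u, hu, v, hv, huv⟩ := h
  by_cases huy : G.ReachIn A u y
  · exact ⟨v, hv, u, hu, fun h => huv h.symm, fun h => huv (huy.trans h.symm)⟩
  · exact ⟨u, hu, v, hv, huv, huy⟩

theorem heavyPathsBelow : ∀ n, HeavyPathsBelow V n
  | 0 => fun _ _ _ h => absurd h (Nat.not_lt_zero _)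
  | n + 1 => fun s G w hsn hsymm hnn hs x hx y hy hxy d hd => by
    have ih : HeavyPathsBelow V s.card := fun t _ _ ht => heavyPathsBelow n t _ _ (by omega)
    rcases le_or_gt d 0 with hd0 | hd0
    · obtain ⟨p, hp⟩ := hs.exists_isPath hx hy
      exact ⟨p, hp, hd0.trans (p.wWeight_nonneg hnn)⟩
    rcases hs.three_le_card.eq_or_lt with h3 | h4
    · exact hs.exists_heavy_path_of_card_eq_three hsymm h3.symm hx hy hxy hd
    by_cases hsep : ∀ c ∈ s, c ≠ x → G.ConnectedIn (↑s \ {x, c})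
    · exact hs.exists_heavy_path_of_contract ih hsymm hnn h4 hx hy hxy hd hsep
    push Not at hsep
    obtain ⟨c, hc, hcx, hA⟩ := hsep
    obtain ⟨u₀, hu₀, u₁, hu₁, h₀₁, h₀y⟩ := exists_not_reachIn_of_not_connectedIn hA y
    exact hs.exists_heavy_path_of_cut ih hsymm hnn hx hy hxy hd0 hd hc hcx hu₀ hu₁ h₀₁ h₀y

end SimpleGraph

theorem stmt0 [Fintype V] (G : SimpleGraph V) (w : V → V → ℝ)
    (hsymm : ∀ u v, w u v = w v u) (hnn : ∀ u v, 0 ≤ w u v)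
    (h2 : G.TwoConnected) (x y : V) (hxy : x ≠ y) (d : ℝ)
    (hd : ∀ v : V, v ≠ x → v ≠ y → d ≤ G.wDeg w v) :
    ∃ p : G.Walk x y, p.IsPath ∧ d ≤ p.wWeight w :=
  heavyPathsBelow _ Finset.univ G w (Nat.lt_succ_self _) hsymm hnn h2.twoConnectedOn_univ
    x (Finset.mem_univ x) y (Finset.mem_univ y) hxy d fun v _ => hd v
end

section
/- For every real number d > 0 there exists a 2-connected weighted graph G with two distinguished vertices x and y such that d^w(v1)+d^w(v2)+d^w(v3) ≥ 3d holds vacuously for every three pairwise nonadjacent vertices v1, v2, v3 in V(G)\{x,y} (because no three pairwise nonadjacent vertices exist in G), yet G contains neither an (x,y)-path of weight at least d nor a Hamilton (x,y)-path. (Concretely: take G to be the union of two complete graphs, each on at least 3 vertices, sharing exactly the two vertices x and y, with every edge given weight 0.) -/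
open SimpleGraph

variable {V : Type*}

/-!
Glue two triangles along the vertices `x = 0` and `y = 1`, with all weights `0`. Every
`(x,y)`-path then has weight `0 < d`, and only the two vertices `2, 3` lie outside `{x, y}`,
so there is no independent triple there. A Hamilton `(x,y)`-path would have length `3`, and its
middle edge would join `2` and `3`, which are not adjacent. Removing any vertex leaves one of
`x, y`, which is adjacent to everything, so the graph is 2-connected.
-/

namespace SimpleGraph

lemma connected_of_forall_adj {G : SimpleGraph V} (h : V) (hh : ∀ u, u ≠ h → G.Adj h u) :
    G.Connected :=
  (connected_iff_exists_forall_reachable G).2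
    ⟨h, fun u => by
      by_cases hu : u = h
      exacts [hu ▸ Reachable.rfl, (hh u hu).reachable]⟩

namespace Walk

variable {G : SimpleGraph V} {x y : V}

@[simp]
lemma wWeight_zero (p : G.Walk x y) : p.wWeight (fun _ _ => 0) = 0 := by
  simp [wWeight]

lemma IsPath.exists_adj_of_three_le_length {p : G.Walk x y} (hp : p.IsPath)
    (hlen : 3 ≤ p.length) : ∃ u v, u ≠ x ∧ u ≠ y ∧ v ≠ x ∧ v ≠ y ∧ G.Adj u v := by
  refine ⟨p.getVert 1, p.getVert 2, ?_, ?_, ?_, ?_, p.adj_getVert_succ (by omega)⟩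
  · rw [Ne, hp.getVert_eq_start_iff (by omega)]; omega
  · rw [Ne, hp.getVert_eq_end_iff (by omega)]; omega
  · rw [Ne, hp.getVert_eq_start_iff (by omega)]; omega
  · rw [Ne, hp.getVert_eq_end_iff (by omega)]; omega

lemma IsPath.exists_not_mem_support_of_not_adj [Fintype V] [DecidableEq V] (hcard : 4 ≤ Fintype.card V)
    (hind : ∀ u v, u ≠ x → u ≠ y → v ≠ x → v ≠ y → ¬ G.Adj u v)
    {p : G.Walk x y} (hp : p.IsPath) : ∃ v, v ∉ p.support := by
  by_contra! hall
  have hlen := (hp.isHamiltonian_iff.2 hall).length_eq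
  obtain ⟨u, v, hux, huy, hvx, hvy, huv⟩ := hp.exists_adj_of_three_le_length (by omega)
  exact hind u v hux huy hvx hvy huv

end Walk

def gluedTriangles : SimpleGraph (Fin 4) where
  Adj u v := u ≠ v ∧ (u.val < 2 ∨ v.val < 2)
  symm := ⟨fun _ _ h => ⟨h.1.symm, h.2.symm⟩⟩
  loopless := ⟨fun _ h => h.1 rfl⟩

instance : DecidableRel gluedTriangles.Adj :=
  fun u v => inferInstanceAs (Decidable (u ≠ v ∧ (u.val < 2 ∨ v.val < 2)))

lemma gluedTriangles_not_adj :
    ∀ u v : Fin 4, u ≠ 0 → u ≠ 1 → v ≠ 0 → v ≠ 1 → ¬ gluedTriangles.Adj u v := by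
  decide

lemma gluedTriangles_twoConnected : gluedTriangles.TwoConnected := by
  refine ⟨by simp, fun v => ?_⟩
  obtain ⟨h, hh, hhv⟩ : ∃ h : Fin 4, h.val < 2 ∧ h ≠ v :=
    if hv : v = 0 then ⟨1, by decide, hv ▸ by decide⟩ else ⟨0, by decide, Ne.symm hv⟩
  exact connected_of_forall_adj ⟨h, hhv⟩ fun u hu =>
    ⟨fun e => hu (Subtype.ext e).symm, .inl hh⟩

end SimpleGraph

theorem stmt7 (d : ℝ) (hd : 0 < d) :
    ∃ (V : Type) (_ : Fintype V) (G : SimpleGraph V) (w : V → V → ℝ) (x y : V),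
      (∀ u v, w u v = w v u) ∧ (∀ u v, 0 ≤ w u v) ∧ G.TwoConnected ∧ x ≠ y ∧
      (¬ ∃ v₁ v₂ v₃ : V, v₁ ≠ x ∧ v₁ ≠ y ∧ v₂ ≠ x ∧ v₂ ≠ y ∧ v₃ ≠ x ∧ v₃ ≠ y ∧
        v₁ ≠ v₂ ∧ v₁ ≠ v₃ ∧ v₂ ≠ v₃ ∧
        ¬ G.Adj v₁ v₂ ∧ ¬ G.Adj v₁ v₃ ∧ ¬ G.Adj v₂ v₃) ∧
      (∀ p : G.Walk x y, p.IsPath → p.wWeight w < d ∧ ∃ v : V, v ∉ p.support) := by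
  refine ⟨Fin 4, inferInstance, gluedTriangles, fun _ _ => 0, 0, 1, fun _ _ => rfl,
    fun _ _ => le_rfl, gluedTriangles_twoConnected, by decide, ?_, fun p hp => ?_⟩
  · have two_outside : ¬ ∃ v₁ v₂ v₃ : Fin 4, v₁ ≠ 0 ∧ v₁ ≠ 1 ∧ v₂ ≠ 0 ∧ v₂ ≠ 1 ∧
        v₃ ≠ 0 ∧ v₃ ≠ 1 ∧ v₁ ≠ v₂ ∧ v₁ ≠ v₃ ∧ v₂ ≠ v₃ := by
      decide
    rintro ⟨v₁, v₂, v₃, h₁, h₂, h₃, h₄, h₅, h₆, h₇, h₈, h₉, -⟩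
    exact two_outside ⟨v₁, v₂, v₃, h₁, h₂, h₃, h₄, h₅, h₆, h₇, h₈, h₉⟩
  · exact ⟨by simpa using hd,
      hp.exists_not_mem_support_of_not_adj (by simp) gluedTriangles_not_adj⟩
end
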